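/- In the conservative case (q = 1) with b > 2, the conditional second moment U_n = E[T_{2,n}² | 𝒜] = Σ_{m∈{0,1}ⁿ, w∈ℕ₊ⁿ} (b-1)^{n-ς(m)} ∏_{j=0}^{n-1} a²_{w_{j+1}}(w|_j, m|_j) is a nonnegative martingale with respect to the filtration (𝒜_n), where ς(m) is the number of zeros in m. Its mean is 1, i.e. E U_n = 1 for all n. -/

import Mathlib

open MeasureTheory ProbabilityTheory Filter

/-- Nodes of the tree `⋃ₙ ℕ₊ⁿ × {0,1}ⁿ`. -/
abbrev TreeNode : Type := Σ k : ℕ, (Fin k → ℕ) × (Fin k → Bool)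

/-- The Mandelbrot martingale
`Uₙ = Σ_{|w|=|m|=n} (b-1)^{n-ς(m)} ∏_{j<n} a²_{w_{j+1}}(w|_j, m|_j)` on the tree
`⋃ₙ ℕ₊ⁿ × {0,1}ⁿ`, where `ς(m)` is the number of zeros (`false`s) of `m`, so
`n - ς(m)` is the number of ones (`true`s). -/
noncomputable def Ufun {Ω : Type*} (b : ℝ) (A : TreeNode → Ω → ℕ → ℝ)
    (n : ℕ) (ω : Ω) : ℝ :=
  ∑' p : (Fin n → ℕ) × (Fin n → Bool),
    (b - 1) ^ (Finset.univ.filter (fun j => p.2 j = true)).card *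
      ∏ j : Fin n,
        (A ⟨j.1, fun i => p.1 (Fin.castLE j.isLt.le i),
              fun i => p.2 (Fin.castLE j.isLt.le i)⟩ ω (p.1 j)) ^ 2

/-- The σ-field `𝒜ₙ` generated by the weights at the nodes of generation `< n`. -/
def Afield {Ω : Type*} [MeasurableSpace Ω] (A : TreeNode → Ω → ℕ → ℝ)
    (n : ℕ) : MeasurableSpace Ω :=
  ⨆ (x : TreeNode) (_ : x.1 < n), MeasurableSpace.comap (A x) inferInstance

open scoped ENNReal

/-!
Work with the summands of `Uₙ` in `ℝ≥0∞`, where sums and integrals commute. A path of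
generation `n + 1` is a path `(w, m)` of generation `n` followed by a child `(x, k)`, and its
weight is the weight of `(w, m)`, which is `𝒜ₙ`-measurable, times `(b-1)^k a_x²(w, m)`, which is
independent of `𝒜ₙ`. Hence on every set of `𝒜ₙ` the integral of `Uₙ₊₁` is that of `Uₙ` times
`Σ_{x,k} (b-1)^k E a_x² = b · (1/b) = 1`. On the whole space this gives `E Uₙ = 1`, so `Uₙ` is
a.e. finite and integrable, and on the sets of `𝒜ₙ` it is the martingale property.
-/

lemma summable_sq_of_summable {ι : Type*} {f : ι → ℝ} (hf : Summable f) :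
    Summable fun j => f j ^ 2 := by
  refine Summable.of_norm_bounded_eventually hf.abs ?_
  filter_upwards [hf.tendsto_cofinite_zero.eventually (Metric.closedBall_mem_nhds 0 one_pos)]
    with j hj
  rw [dist_zero_right, Real.norm_eq_abs] at hj
  rw [Real.norm_eq_abs, abs_pow, sq]
  exact mul_le_of_le_one_left (abs_nonneg _) hj

lemma tsum_lintegral_ofReal_sq {Ω ι : Type*} [MeasurableSpace Ω] {μ : Measure Ω} [Countable ι]
    {a : Ω → ι → ℝ} (ha : Measurable a) (hsum : ∀ᵐ ω ∂μ, Summable (a ω))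
    (hint : Integrable (fun ω => ∑' j, a ω j ^ 2) μ) :
    ∑' j, ∫⁻ ω, ENNReal.ofReal (a ω j ^ 2) ∂μ = ENNReal.ofReal (∫ ω, ∑' j, a ω j ^ 2 ∂μ) := by
  rw [ofReal_integral_eq_lintegral_ofReal hint
      (ae_of_all _ fun ω => tsum_nonneg fun j => sq_nonneg _),
    ← lintegral_tsum fun j => by fun_prop]
  refine lintegral_congr_ae ?_
  filter_upwards [hsum] with ω hω
  exact (ENNReal.ofReal_tsum_of_nonneg (fun j => sq_nonneg _) (summable_sq_of_summable hω)).symm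

lemma tsum_ofReal_pow_toNat_mul_eq_one {b : ℝ} (hb : 1 ≤ b) {C : ℕ → ℝ≥0∞}
    (hC : ∑' x, C x = ENNReal.ofReal (1 / b)) :
    ∑' z : ℕ × Bool, ENNReal.ofReal (b - 1) ^ z.2.toNat * C z.1 = 1 := by
  have hbool : 1 + ENNReal.ofReal (b - 1) = ENNReal.ofReal b := by
    rw [← ENNReal.ofReal_one, ← ENNReal.ofReal_add zero_le_one (by linarith), add_sub_cancel]
  rw [ENNReal.tsum_prod']
  simp_rw [tsum_fintype, Fintype.sum_bool, Bool.toNat_true, Bool.toNat_false, pow_one, pow_zero,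
    ← add_mul, add_comm _ (1 : ℝ≥0∞), hbool]
  rw [ENNReal.tsum_mul_left, hC, ← ENNReal.ofReal_mul (by positivity),
    mul_one_div_cancel (by positivity), ENNReal.ofReal_one]

lemma ProbabilityTheory.Indep.setLIntegral_mul_eq {Ω : Type*} {m₁ m₂ mΩ : MeasurableSpace Ω}
    {μ : Measure Ω} (hind : Indep m₁ m₂ μ) (h₁ : m₁ ≤ mΩ) (h₂ : m₂ ≤ mΩ) {f g : Ω → ℝ≥0∞}
    (hf : Measurable[m₁] f) (hg : Measurable[m₂] g) {s : Set Ω} (hs : MeasurableSet[m₁] s) :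
    ∫⁻ ω in s, f ω * g ω ∂μ = (∫⁻ ω in s, f ω ∂μ) * ∫⁻ ω, g ω ∂μ := by
  rw [← lintegral_indicator (h₁ s hs), ← lintegral_indicator (h₁ s hs)]
  simp_rw [Set.indicator_mul_left]
  exact lintegral_mul_eq_lintegral_mul_lintegral_of_independent_measurableSpace h₁ h₂ hind
    (hf.indicator hs) hg

section Tree

variable {Ω : Type*}

/-- The node `(w|_j, m|_j)` of generation `j` on the path `p = (w, m)`. -/
def prefixNode {n : ℕ} (p : (Fin n → ℕ) × (Fin n → Bool)) (j : Fin n) : TreeNode :=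
  ⟨j, fun i => p.1 (Fin.castLE j.isLt.le i), fun i => p.2 (Fin.castLE j.isLt.le i)⟩

lemma prefixNode_snoc_castSucc {n : ℕ} (q : Fin n → ℕ) (m : Fin n → Bool) (x : ℕ) (k : Bool)
    (j : Fin n) :
    prefixNode (Fin.snoc q x, Fin.snoc m k) j.castSucc = prefixNode (q, m) j := by
  simp only [prefixNode]
  congr 2 <;> funext i <;> exact Fin.snoc_castSucc (i := Fin.castLE j.isLt.le i) ..

lemma prefixNode_snoc_last {n : ℕ} (q : Fin n → ℕ) (m : Fin n → Bool) (x : ℕ) (k : Bool) :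
    prefixNode (Fin.snoc q x, Fin.snoc m k) (Fin.last n) = ⟨n, q, m⟩ := by
  simp only [prefixNode]
  congr 2 <;> funext i <;> exact Fin.snoc_castSucc (i := i) ..

lemma card_filter_snoc_eq_true {n : ℕ} (m : Fin n → Bool) (k : Bool) :
    (Finset.univ.filter fun j => (Fin.snoc m k : Fin (n + 1) → Bool) j = true).card
      = (Finset.univ.filter fun j => m j = true).card + k.toNat := by
  rw [Finset.card_filter, Finset.card_filter, Fin.sum_univ_castSucc]
  cases k <;> simp [Fin.snoc_castSucc, Fin.snoc_last]

noncomputable def Uterm (b : ℝ) (A : TreeNode → Ω → ℕ → ℝ) (n : ℕ)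
    (p : (Fin n → ℕ) × (Fin n → Bool)) (ω : Ω) : ℝ≥0∞ :=
  ENNReal.ofReal (b - 1) ^ (Finset.univ.filter fun j => p.2 j = true).card *
    ∏ j, ENNReal.ofReal (A (prefixNode p j) ω (p.1 j) ^ 2)

lemma Uterm_snoc (b : ℝ) (A : TreeNode → Ω → ℕ → ℝ) {n : ℕ} (q : Fin n → ℕ) (m : Fin n → Bool)
    (x : ℕ) (k : Bool) (ω : Ω) :
    Uterm b A (n + 1) (Fin.snoc q x, Fin.snoc m k) ω
      = Uterm b A n (q, m) ω *
          (ENNReal.ofReal (b - 1) ^ k.toNat * ENNReal.ofReal (A ⟨n, q, m⟩ ω x ^ 2)) := by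
  simp only [Uterm, card_filter_snoc_eq_true, Fin.prod_univ_castSucc, prefixNode_snoc_castSucc,
    prefixNode_snoc_last, Fin.snoc_castSucc, Fin.snoc_last, pow_add]
  ring

lemma Uterm_ne_top (b : ℝ) (A : TreeNode → Ω → ℕ → ℝ) (n : ℕ)
    (p : (Fin n → ℕ) × (Fin n → Bool)) (ω : Ω) : Uterm b A n p ω ≠ ∞ :=
  ENNReal.mul_ne_top (ENNReal.pow_ne_top ENNReal.ofReal_ne_top)
    (ENNReal.prod_ne_top fun _ _ => ENNReal.ofReal_ne_top)

lemma Ufun_eq_toReal_tsum_Uterm {b : ℝ} (hb : 1 ≤ b) (A : TreeNode → Ω → ℕ → ℝ) (n : ℕ)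
    (ω : Ω) : Ufun b A n ω = (∑' p, Uterm b A n p ω).toReal := by
  have hb1 : 0 ≤ b - 1 := by linarith
  rw [ENNReal.tsum_toReal_eq (Uterm_ne_top b A n · ω)]
  refine tsum_congr fun p => ?_
  rw [Uterm, ← ENNReal.ofReal_pow hb1, ← ENNReal.ofReal_prod_of_nonneg fun j _ => sq_nonneg _,
    ← ENNReal.ofReal_mul (pow_nonneg hb1 _), ENNReal.toReal_ofReal (by positivity)]
  rfl

lemma Ufun_nonneg {b : ℝ} (hb : 1 ≤ b) (A : TreeNode → Ω → ℕ → ℝ) (n : ℕ) (ω : Ω) :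
    0 ≤ Ufun b A n ω :=
  Ufun_eq_toReal_tsum_Uterm hb A n ω ▸ ENNReal.toReal_nonneg

def pathSnocEquiv (n : ℕ) :
    ((Fin n → ℕ) × (Fin n → Bool)) × (ℕ × Bool) ≃ (Fin (n + 1) → ℕ) × (Fin (n + 1) → Bool) where
  toFun z := (Fin.snoc z.1.1 z.2.1, Fin.snoc z.1.2 z.2.2)
  invFun p := ((Fin.init p.1, Fin.init p.2), (p.1 (Fin.last n), p.2 (Fin.last n)))
  left_inv := by rintro ⟨⟨q, m⟩, x, k⟩; simp
  right_inv := by rintro ⟨w, m⟩; simp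

section Measurability

variable [MeasurableSpace Ω] {A : TreeNode → Ω → ℕ → ℝ}

lemma comap_le_Afield {n : ℕ} {x : TreeNode} (hx : x.1 < n) :
    MeasurableSpace.comap (A x) inferInstance ≤ Afield A n :=
  le_iSup₂ (f := fun (x : TreeNode) (_ : x.1 < n) => MeasurableSpace.comap (A x) inferInstance)
    x hx

lemma Afield_le (hA : ∀ x, Measurable (A x)) (n : ℕ) : Afield A n ≤ ‹MeasurableSpace Ω› :=
  iSup₂_le fun x _ => (hA x).comap_le

lemma measurable_Uterm_Afield (b : ℝ) (n : ℕ) (p : (Fin n → ℕ) × (Fin n → Bool)) :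
    Measurable[Afield A n] (Uterm b A n p) := by
  refine measurable_const.mul (Finset.measurable_prod _ fun j _ => ?_)
  have hnode : Measurable[Afield A n] (A (prefixNode p j)) :=
    (comap_measurable _).mono (comap_le_Afield j.isLt) le_rfl
  exact ENNReal.measurable_ofReal.comp (((measurable_pi_apply _).comp hnode).pow_const 2)

lemma measurable_tsum_Uterm_Afield (b : ℝ) (n : ℕ) :
    Measurable[Afield A n] fun ω => ∑' p, Uterm b A n p ω :=
  @Measurable.tsum Ω ℝ≥0∞ _ (Afield A n) _ _ _ _ _ _ _ _ _ _ _ _ (measurable_Uterm_Afield b n)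

lemma measurable_Ufun_Afield {b : ℝ} (hb : 1 ≤ b) (n : ℕ) :
    Measurable[Afield A n] (Ufun b A n) := by
  simp_rw [funext (Ufun_eq_toReal_tsum_Uterm hb A n)]
  exact (measurable_tsum_Uterm_Afield b n).ennreal_toReal

lemma indep_Afield_comap (μ : Measure Ω) (hA : ∀ x, Measurable (A x)) (hindep : iIndepFun A μ)
    {n : ℕ} {x : TreeNode} (hx : n ≤ x.1) :
    Indep (Afield A n) (MeasurableSpace.comap (A x) inferInstance) μ :=
  indep_of_indep_of_le_right (indep_biSup_compl (fun y => (hA y).comap_le) hindep {y | y.1 < n})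
    (le_iSup₂ (f := fun (y : TreeNode) (_ : y ∈ {y : TreeNode | y.1 < n}ᶜ) =>
      MeasurableSpace.comap (A y) inferInstance) x (not_lt.2 hx))

end Measurability

section Martingale

variable [MeasurableSpace Ω] {μ : Measure Ω} {b : ℝ} {A : TreeNode → Ω → ℕ → ℝ}

lemma setLIntegral_Uterm_snoc (hA : ∀ x, Measurable (A x)) (hindep : iIndepFun A μ) {n : ℕ}
    {s : Set Ω} (hs : MeasurableSet[Afield A n] s) (q : Fin n → ℕ) (m : Fin n → Bool) (x : ℕ)
    (k : Bool) :
    ∫⁻ ω in s, Uterm b A (n + 1) (Fin.snoc q x, Fin.snoc m k) ω ∂μ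
      = (∫⁻ ω in s, Uterm b A n (q, m) ω ∂μ) *
          (ENNReal.ofReal (b - 1) ^ k.toNat * ∫⁻ ω, ENNReal.ofReal (A ⟨n, q, m⟩ ω x ^ 2) ∂μ) := by
  have hedge : Measurable[MeasurableSpace.comap (A ⟨n, q, m⟩) inferInstance]
      fun ω => ENNReal.ofReal (b - 1) ^ k.toNat * ENNReal.ofReal (A ⟨n, q, m⟩ ω x ^ 2) :=
    measurable_const.mul
      (((measurable_pi_apply x).comp (comap_measurable _)).pow_const 2).ennreal_ofReal
  have hnode : Indep (Afield A n) (MeasurableSpace.comap (A ⟨n, q, m⟩) inferInstance) μ :=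
    indep_Afield_comap μ hA hindep le_rfl
  have hprod := hnode.setLIntegral_mul_eq (Afield_le hA n)
      (hA _).comap_le (measurable_Uterm_Afield b n (q, m)) hedge hs
  simp_rw [Uterm_snoc, hprod]
  rw [lintegral_const_mul' _ _ (ENNReal.pow_ne_top ENNReal.ofReal_ne_top)]

lemma setLIntegral_tsum_Uterm_succ (hb : 1 ≤ b) (hA : ∀ x, Measurable (A x))
    (hindep : iIndepFun A μ)
    (hmoment : ∀ x, ∑' j, ∫⁻ ω, ENNReal.ofReal (A x ω j ^ 2) ∂μ = ENNReal.ofReal (1 / b))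
    {n : ℕ} {s : Set Ω} (hs : MeasurableSet[Afield A n] s) :
    ∫⁻ ω in s, ∑' p, Uterm b A (n + 1) p ω ∂μ = ∫⁻ ω in s, ∑' p, Uterm b A n p ω ∂μ := by
  have hmeas (k : ℕ) (p) : AEMeasurable (Uterm b A k p) (μ.restrict s) :=
    ((measurable_Uterm_Afield b k p).mono (Afield_le hA k) le_rfl).aemeasurable
  rw [lintegral_tsum (hmeas _), lintegral_tsum (hmeas _), ← (pathSnocEquiv n).tsum_eq,
    ENNReal.tsum_prod']
  refine tsum_congr fun q => ?_
  simp only [pathSnocEquiv, Equiv.coe_fn_mk, setLIntegral_Uterm_snoc hA hindep hs]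
  rw [ENNReal.tsum_mul_left, tsum_ofReal_pow_toNat_mul_eq_one hb (hmoment _), mul_one]

lemma lintegral_tsum_Uterm [IsProbabilityMeasure μ] (hb : 1 ≤ b) (hA : ∀ x, Measurable (A x))
    (hindep : iIndepFun A μ)
    (hmoment : ∀ x, ∑' j, ∫⁻ ω, ENNReal.ofReal (A x ω j ^ 2) ∂μ = ENNReal.ofReal (1 / b))
    (n : ℕ) : ∫⁻ ω, ∑' p, Uterm b A n p ω ∂μ = 1 := by
  induction n with
  | zero => simp [Uterm]
  | succ n ih =>
    rw [← setLIntegral_univ, setLIntegral_tsum_Uterm_succ hb hA hindep hmoment MeasurableSet.univ,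
      setLIntegral_univ, ih]

lemma setIntegral_Ufun [IsProbabilityMeasure μ] (hb : 1 ≤ b) (hA : ∀ x, Measurable (A x))
    (hindep : iIndepFun A μ)
    (hmoment : ∀ x, ∑' j, ∫⁻ ω, ENNReal.ofReal (A x ω j ^ 2) ∂μ = ENNReal.ofReal (1 / b))
    (n : ℕ) (s : Set Ω) :
    ∫ ω in s, Ufun b A n ω ∂μ = (∫⁻ ω in s, ∑' p, Uterm b A n p ω ∂μ).toReal := by
  have hmeas := (measurable_tsum_Uterm_Afield b n).mono (Afield_le hA n) le_rfl
  have hfin := ae_lt_top hmeas (by rw [lintegral_tsum_Uterm hb hA hindep hmoment n]; simp)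
  simp_rw [Ufun_eq_toReal_tsum_Uterm hb]
  exact integral_toReal hmeas.aemeasurable (ae_restrict_of_ae hfin)

lemma integrable_Ufun [IsProbabilityMeasure μ] (hb : 1 ≤ b) (hA : ∀ x, Measurable (A x))
    (hindep : iIndepFun A μ)
    (hmoment : ∀ x, ∑' j, ∫⁻ ω, ENNReal.ofReal (A x ω j ^ 2) ∂μ = ENNReal.ofReal (1 / b))
    (n : ℕ) : Integrable (Ufun b A n) μ := by
  simp_rw [funext (Ufun_eq_toReal_tsum_Uterm hb A n)]
  refine integrable_toReal_of_lintegral_ne_top ?_ (by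
    rw [lintegral_tsum_Uterm hb hA hindep hmoment n]; simp)
  exact ((measurable_tsum_Uterm_Afield b n).mono (Afield_le hA n) le_rfl).aemeasurable

lemma condExp_Ufun_succ [IsProbabilityMeasure μ] (hb : 1 ≤ b) (hA : ∀ x, Measurable (A x))
    (hindep : iIndepFun A μ)
    (hmoment : ∀ x, ∑' j, ∫⁻ ω, ENNReal.ofReal (A x ω j ^ 2) ∂μ = ENNReal.ofReal (1 / b))
    (n : ℕ) : μ[Ufun b A (n + 1)|Afield A n] =ᵐ[μ] Ufun b A n := by
  refine (ae_eq_condExp_of_forall_setIntegral_eq (Afield_le hA n)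
    (integrable_Ufun hb hA hindep hmoment _)
    (fun s _ _ => (integrable_Ufun hb hA hindep hmoment _).integrableOn) (fun s hs _ => ?_)
    (measurable_Ufun_Afield hb n).stronglyMeasurable.aestronglyMeasurable).symm
  rw [setIntegral_Ufun hb hA hindep hmoment, setIntegral_Ufun hb hA hindep hmoment,
    setLIntegral_tsum_Uterm_succ hb hA hindep hmoment hs]

end Martingale

end Tree

theorem stmt17_general {Ω : Type*} [MeasureSpace Ω] [IsProbabilityMeasure (ℙ : Measure Ω)]
    (b : ℝ) (hb : 2 < b)
    (aseq : Ω → ℕ → ℝ) (hameas : Measurable aseq)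
    (hacons : ∀ᵐ ω ∂ℙ, ∑' j, aseq ω j = 1)
    (ha2 : ∫ ω, ∑' j, (aseq ω j) ^ 2 = 1 / b)
    (A : TreeNode → Ω → ℕ → ℝ)
    (hAmeas : ∀ x, Measurable (A x))
    (hAcopy : ∀ x, IdentDistrib (A x) aseq ℙ ℙ)
    (hAindep : iIndepFun A ℙ) :
    (∀ n ω, 0 ≤ Ufun b A n ω)
    ∧ (∀ n, Integrable (Ufun b A n) ℙ)
    ∧ (∀ n, ∫ ω, Ufun b A n ω = 1)
    ∧ (∀ n, Measurable[Afield A n] (Ufun b A n))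
    ∧ (∀ n, (ℙ[Ufun b A (n + 1)|Afield A n]) =ᵐ[ℙ] Ufun b A n) := by
  have hb1 : 1 ≤ b := by linarith
  have hsummable : ∀ᵐ ω ∂ℙ, Summable (aseq ω) := hacons.mono fun ω hω =>
    by_contra fun h => by simp [tsum_eq_zero_of_not_summable h] at hω
  have hmoment (x : TreeNode) :
      ∑' j, ∫⁻ ω, ENNReal.ofReal (A x ω j ^ 2) = ENNReal.ofReal (1 / b) := by
    have hcopy (j : ℕ) :
        ∫⁻ ω, ENNReal.ofReal (A x ω j ^ 2) = ∫⁻ ω, ENNReal.ofReal (aseq ω j ^ 2) :=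
      ((hAcopy x).comp (u := fun v : ℕ → ℝ => ENNReal.ofReal (v j ^ 2)) (by fun_prop)).lintegral_eq
    simp_rw [hcopy]
    rw [tsum_lintegral_ofReal_sq hameas hsummable
      (Integrable.of_integral_ne_zero (by rw [ha2]; positivity)), ha2]
  refine ⟨Ufun_nonneg hb1 A, integrable_Ufun hb1 hAmeas hAindep hmoment, fun n => ?_,
    measurable_Ufun_Afield hb1, condExp_Ufun_succ hb1 hAmeas hAindep hmoment⟩
  rw [← setIntegral_univ, setIntegral_Ufun hb1 hAmeas hAindep hmoment, setLIntegral_univ,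
    lintegral_tsum_Uterm hb1 hAmeas hAindep hmoment, ENNReal.toReal_one]

/-- In the conservative case (`Σ a_j = 1` a.s., `E Σ a_j² = 1/b`, `b > 2`), with
i.i.d. copies `a(w,m)` of `a` indexed by the nodes of the tree, the process
`(Uₙ)` is a nonnegative martingale for the filtration `(𝒜ₙ)` with mean 1. -/
theorem stmt17 {Ω : Type*} [MeasureSpace Ω] [IsProbabilityMeasure (ℙ : Measure Ω)]
    (b : ℝ) (hb : 2 < b)
    (aseq : Ω → ℕ → ℝ) (hameas : Measurable aseq) (hann : ∀ ω j, 0 ≤ aseq ω j)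
    (hacons : ∀ᵐ ω ∂ℙ, ∑' j, aseq ω j = 1)
    (ha2 : ∫ ω, ∑' j, (aseq ω j) ^ 2 = 1 / b)
    (A : TreeNode → Ω → ℕ → ℝ)
    (hAmeas : ∀ x, Measurable (A x))
    (hAcopy : ∀ x, IdentDistrib (A x) aseq ℙ ℙ)
    (hAindep : iIndepFun A ℙ) :
    (∀ n ω, 0 ≤ Ufun b A n ω)
    ∧ (∀ n, Integrable (Ufun b A n) ℙ)
    ∧ (∀ n, ∫ ω, Ufun b A n ω = 1)
    ∧ (∀ n, Measurable[Afield A n] (Ufun b A n))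
    ∧ (∀ n, (ℙ[Ufun b A (n + 1)|Afield A n]) =ᵐ[ℙ] Ufun b A n) :=
  stmt17_general b hb aseq hameas hacons ha2 A hAmeas hAcopy hAindep
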